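/- Let 0 < d < 1, k ≥ 1, t ≥ 0, c ∈ (0,1), and fix 0 < ξ < 1 and 0 < δ < 1. Suppose κ ∈ (0,1) has density proportional to κ^{d+k/2−1}(1−κ+κc)^{−d−1} exp(−κt/2). Then E[κ·1{κ>ξ}] ≤ K c^{−d} exp(−ξ(1−δ)t/2) for a constant K depending only on d, k, ξ, δ. -/

import Mathlib

/-!
On `(0, ξδ)` the factor `(1 - κ + κc)^(-d-1)` is at least `1` and `exp(-κt/2) ≥ exp(-ξδt/2)`, so
the normalising integral is at least `exp(-ξδt/2) (ξδ)^(p+1)/(p+1)`. On `(ξ, 1)` we have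
`κ^(p+1) ≤ 1` and `exp(-κt/2) ≤ exp(-ξt/2)`, and `(1 - κ + κc)^(-d-1)` integrates explicitly to
at most `c^(-d)/d`. The quotient of the two exponentials is `exp(-ξ(1-δ)t/2)`.
-/

open MeasureTheory Set Real

/-- Unnormalised posterior density of `κ`; the paper's exponent is `p = d + k/2 - 1`. -/
noncomputable def eigPosteriorDensity (p d c t κ : ℝ) : ℝ :=
  κ ^ p * (1 - κ + κ * c) ^ (-d - 1) * exp (-κ * t / 2)

section

variable {p d c t κ : ℝ}

lemma one_sub_add_mul_pos (hc : 0 < c) (hκ : κ ∈ Icc (0 : ℝ) 1) : 0 < 1 - κ + κ * c := by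
  nlinarith [hκ.1, hκ.2, mul_nonneg hκ.1 hc.le]

lemma one_sub_add_mul_mem_Icc (hc : c ≤ 1) (hκ : κ ∈ Icc (0 : ℝ) 1) :
    1 - κ + κ * c ∈ Icc c 1 :=
  ⟨by nlinarith [hκ.1, hκ.2], by nlinarith [hκ.1, hκ.2]⟩

lemma continuousOn_one_sub_add_mul_rpow (hc : 0 < c) (q : ℝ) :
    ContinuousOn (fun κ : ℝ => (1 - κ + κ * c) ^ q) (Icc 0 1) :=
  (by fun_prop : Continuous fun κ : ℝ => 1 - κ + κ * c).continuousOn.rpow_const fun _ hκ =>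
    Or.inl (one_sub_add_mul_pos hc hκ).ne'

lemma eigPosteriorDensity_nonneg (hc : 0 < c) (hκ : κ ∈ Icc (0 : ℝ) 1) :
    0 ≤ eigPosteriorDensity p d c t κ :=
  mul_nonneg (mul_nonneg (rpow_nonneg hκ.1 _) (rpow_nonneg (one_sub_add_mul_pos hc hκ).le _))
    (exp_pos _).le

lemma integral_Ioo_zero_rpow (hp : -1 < p) {s : ℝ} (hs : 0 < s) :
    ∫ κ in Ioo 0 s, κ ^ p = s ^ (p + 1) / (p + 1) := by
  rw [← integral_Ioc_eq_integral_Ioo, ← intervalIntegral.integral_of_le hs.le,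
    integral_rpow (Or.inl hp), zero_rpow (by linarith), sub_zero]

lemma integral_one_sub_add_mul_rpow (hd : d ≠ 0) (hc0 : 0 < c) (hc1 : c ≠ 1) {ξ : ℝ}
    (hξ : ξ ∈ Icc (0 : ℝ) 1) :
    ∫ κ in ξ..1, (1 - κ + κ * c) ^ (-d - 1) =
      (c ^ (-d) - (1 - ξ + ξ * c) ^ (-d)) / (d * (1 - c)) := by
  have hdc : d * (1 - c) ≠ 0 := mul_ne_zero hd (sub_ne_zero.2 hc1.symm)
  have hIcc : uIcc ξ 1 ⊆ Icc 0 1 := by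
    rw [uIcc_of_le hξ.2]; exact Icc_subset_Icc_left hξ.1
  have hderiv : ∀ κ ∈ uIcc ξ 1, HasDerivAt (fun x => (1 - x + x * c) ^ (-d) / (d * (1 - c)))
      ((1 - κ + κ * c) ^ (-d - 1)) κ := by
    intro κ hκ
    have hbase : HasDerivAt (fun x : ℝ => 1 - x + x * c) (c - 1) κ :=
      (((hasDerivAt_id κ).const_sub 1).add ((hasDerivAt_id κ).mul_const c)).congr_deriv (by ring)
    refine ((hbase.rpow_const (p := -d)
      (Or.inl (one_sub_add_mul_pos hc0 (hIcc hκ)).ne')).div_const (d * (1 - c))).congr_deriv ?_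
    rw [div_eq_iff hdc]
    ring
  rw [intervalIntegral.integral_eq_sub_of_hasDerivAt hderiv
    ((continuousOn_one_sub_add_mul_rpow hc0 _).mono hIcc).intervalIntegrable,
    sub_self, zero_add, one_mul, sub_div]

lemma integral_one_sub_add_mul_rpow_le (hd : d ∈ Ioc (0 : ℝ) 1) (hc : c ∈ Ioo (0 : ℝ) 1)
    {ξ : ℝ} (hξ : ξ ∈ Icc (0 : ℝ) 1) :
    ∫ κ in Ioo ξ 1, (1 - κ + κ * c) ^ (-d - 1) ≤ c ^ (-d) / d := by
  obtain ⟨hd0, hd1⟩ := hd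
  obtain ⟨hc0, hc1⟩ := hc
  have hb := one_sub_add_mul_mem_Icc hc1.le hξ
  have h_one_le : 1 ≤ (1 - ξ + ξ * c) ^ (-d) :=
    one_le_rpow_of_pos_of_le_one_of_nonpos (hc0.trans_le hb.1) hb.2 (by linarith)
  have h_c_mul : c * c ^ (-d) ≤ 1 := by
    rw [mul_comm, ← rpow_add_one hc0.ne']
    exact rpow_le_one hc0.le hc1.le (by linarith)
  rw [← integral_Ioc_eq_integral_Ioo, ← intervalIntegral.integral_of_le hξ.2,
    integral_one_sub_add_mul_rpow hd0.ne' hc0 hc1.ne hξ,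
    div_le_div_iff₀ (mul_pos hd0 (by linarith)) hd0]
  nlinarith

lemma integrableOn_eigPosteriorDensity (hp : -1 < p) (hc : 0 < c) :
    IntegrableOn (eigPosteriorDensity p d c t) (Icc 0 1) := by
  have hpow : IntegrableOn (fun κ : ℝ => κ ^ p) (Icc 0 1) := by
    rw [integrableOn_Icc_iff_integrableOn_Ioc, ← intervalIntegrable_iff_integrableOn_Ioc_of_le
      zero_le_one]
    exact intervalIntegral.intervalIntegrable_rpow' hp
  have hrest : ContinuousOn (fun κ : ℝ => (1 - κ + κ * c) ^ (-d - 1) * exp (-κ * t / 2))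
      (Icc 0 1) :=
    (continuousOn_one_sub_add_mul_rpow hc _).mul (by fun_prop)
  exact (hpow.mul_continuousOn hrest isCompact_Icc).congr_fun
    (fun κ _ => (mul_assoc _ _ _).symm) measurableSet_Icc

lemma exp_mul_rpow_div_le_integral_eigPosteriorDensity (hp : -1 < p) (hd : -1 ≤ d)
    (hc : c ∈ Ioc (0 : ℝ) 1) (ht : 0 ≤ t) {s : ℝ} (hs : s ∈ Ioc (0 : ℝ) 1) :
    exp (-s * t / 2) * (s ^ (p + 1) / (p + 1)) ≤ ∫ κ in Ioo 0 1, eigPosteriorDensity p d c t κ := by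
  have hint := (integrableOn_eigPosteriorDensity (d := d) (t := t) hp hc.1).mono_set
    Ioo_subset_Icc_self
  have hpointwise : ∀ κ ∈ Ioo 0 s, exp (-s * t / 2) * κ ^ p ≤ eigPosteriorDensity p d c t κ := by
    intro κ hκ
    have hκ1 : κ ∈ Icc (0 : ℝ) 1 := ⟨hκ.1.le, hκ.2.le.trans hs.2⟩
    have hb := one_sub_add_mul_mem_Icc hc.2 hκ1
    have h_one_le : 1 ≤ (1 - κ + κ * c) ^ (-d - 1) :=
      one_le_rpow_of_pos_of_le_one_of_nonpos (one_sub_add_mul_pos hc.1 hκ1) hb.2 (by linarith)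
    have h_rpow : 0 ≤ κ ^ p := rpow_nonneg hκ1.1 _
    have h_exp : exp (-s * t / 2) ≤ exp (-κ * t / 2) :=
      exp_le_exp.2 (by nlinarith [mul_le_mul_of_nonneg_right hκ.2.le ht])
    calc exp (-s * t / 2) * κ ^ p = κ ^ p * 1 * exp (-s * t / 2) := by ring
      _ ≤ eigPosteriorDensity p d c t κ := by
        unfold eigPosteriorDensity
        gcongr
  calc exp (-s * t / 2) * (s ^ (p + 1) / (p + 1)) = ∫ κ in Ioo 0 s, exp (-s * t / 2) * κ ^ p := by
        rw [integral_const_mul, integral_Ioo_zero_rpow hp hs.1]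
    _ ≤ ∫ κ in Ioo 0 s, eigPosteriorDensity p d c t κ :=
        integral_mono_of_nonneg
          (ae_restrict_of_forall_mem measurableSet_Ioo fun κ hκ =>
            mul_nonneg (exp_pos _).le (rpow_nonneg hκ.1.le _))
          (hint.mono_set (Ioo_subset_Ioo_right hs.2))
          (ae_restrict_of_forall_mem measurableSet_Ioo hpointwise)
    _ ≤ ∫ κ in Ioo 0 1, eigPosteriorDensity p d c t κ :=
        setIntegral_mono_set hint (ae_restrict_of_forall_mem measurableSet_Ioo fun κ hκ =>
          eigPosteriorDensity_nonneg hc.1 (Ioo_subset_Icc_self hκ))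
          (Ioo_subset_Ioo_right hs.2).eventuallyLE

lemma integral_mul_eigPosteriorDensity_le (hp : -1 < p) (hd : d ∈ Ioc (0 : ℝ) 1)
    (hc : c ∈ Ioo (0 : ℝ) 1) (ht : 0 ≤ t) {ξ : ℝ} (hξ : ξ ∈ Icc (0 : ℝ) 1) :
    ∫ κ in Ioo ξ 1, κ * eigPosteriorDensity p d c t κ ≤ exp (-ξ * t / 2) * (c ^ (-d) / d) := by
  have hξ_sub : Ioo ξ 1 ⊆ Icc 0 1 := fun κ hκ => ⟨hξ.1.trans hκ.1.le, hκ.2.le⟩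
  have hpointwise : ∀ κ ∈ Ioo ξ 1,
      κ * eigPosteriorDensity p d c t κ ≤ exp (-ξ * t / 2) * (1 - κ + κ * c) ^ (-d - 1) := by
    intro κ hκ
    have hκ0 : 0 < κ := hξ.1.trans_lt hκ.1
    have h_base : 0 ≤ 1 - κ + κ * c := (one_sub_add_mul_pos hc.1 (hξ_sub hκ)).le
    have h_rpow : κ ^ (p + 1) ≤ 1 := rpow_le_one hκ0.le hκ.2.le (by linarith)
    have h_exp : exp (-κ * t / 2) ≤ exp (-ξ * t / 2) :=
      exp_le_exp.2 (by nlinarith [mul_le_mul_of_nonneg_right hκ.1.le ht])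
    calc κ * eigPosteriorDensity p d c t κ
        = κ ^ (p + 1) * (1 - κ + κ * c) ^ (-d - 1) * exp (-κ * t / 2) := by
          rw [eigPosteriorDensity, rpow_add_one hκ0.ne']; ring
      _ ≤ 1 * (1 - κ + κ * c) ^ (-d - 1) * exp (-ξ * t / 2) := by gcongr
      _ = exp (-ξ * t / 2) * (1 - κ + κ * c) ^ (-d - 1) := by ring
  calc ∫ κ in Ioo ξ 1, κ * eigPosteriorDensity p d c t κ
      ≤ ∫ κ in Ioo ξ 1, exp (-ξ * t / 2) * (1 - κ + κ * c) ^ (-d - 1) :=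
        integral_mono_of_nonneg
          (ae_restrict_of_forall_mem measurableSet_Ioo fun κ hκ =>
            mul_nonneg (hξ.1.trans hκ.1.le) (eigPosteriorDensity_nonneg hc.1 (hξ_sub hκ)))
          (((continuousOn_one_sub_add_mul_rpow hc.1 _).integrableOn_Icc.mono_set
            hξ_sub).const_mul _)
          (ae_restrict_of_forall_mem measurableSet_Ioo hpointwise)
    _ = exp (-ξ * t / 2) * ∫ κ in Ioo ξ 1, (1 - κ + κ * c) ^ (-d - 1) := integral_const_mul _ _
    _ ≤ exp (-ξ * t / 2) * (c ^ (-d) / d) := by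
        gcongr; exact integral_one_sub_add_mul_rpow_le hd hc hξ

end

theorem EIG_posterior_kappa_above_bound_general
    (d : ℝ) (k : ℕ) (ξ δ : ℝ) (hd0 : 0 < d) (hd1 : d < 1)
    (hξ : ξ ∈ Ioo (0:ℝ) 1) (hδ : δ ∈ Ioo (0:ℝ) 1) :
    ∃ K : ℝ, 0 < K ∧ ∀ c ∈ Ioo (0:ℝ) 1, ∀ t : ℝ, 0 ≤ t →
      (∫ κ in Ioo ξ 1,
          κ * (κ ^ (d + (k : ℝ) / 2 - 1) * (1 - κ + κ * c) ^ (-d - 1) *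
            Real.exp (-κ * t / 2))) /
        (∫ κ in Ioo (0:ℝ) 1,
          κ ^ (d + (k : ℝ) / 2 - 1) * (1 - κ + κ * c) ^ (-d - 1) *
            Real.exp (-κ * t / 2))
      ≤ K * c ^ (-d) * Real.exp (-ξ * (1 - δ) * t / 2) := by
  have hp : -1 < d + (k : ℝ) / 2 - 1 := by linarith [(by positivity : (0 : ℝ) ≤ k / 2)]
  set p := d + (k : ℝ) / 2 - 1
  have hp1 : 0 < p + 1 := by linarith
  set s := ξ * δ
  have hs : s ∈ Ioc (0 : ℝ) 1 := ⟨mul_pos hξ.1 hδ.1, by nlinarith [hξ.1, hξ.2, hδ.1, hδ.2]⟩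
  have hs_pow : 0 < s ^ (p + 1) := rpow_pos_of_pos hs.1 _
  refine ⟨(p + 1) / (d * s ^ (p + 1)), div_pos hp1 (mul_pos hd0 hs_pow), fun c hc t ht => ?_⟩
  have hN := integral_mul_eigPosteriorDensity_le hp ⟨hd0, hd1.le⟩ hc ht (Ioo_subset_Icc_self hξ)
  have hD := exp_mul_rpow_div_le_integral_eigPosteriorDensity (d := d) hp (by linarith)
    (Ioo_subset_Ioc_self hc) ht hs
  have hc_pow : 0 < c ^ (-d) := rpow_pos_of_pos hc.1 _
  calc _ ≤ exp (-ξ * t / 2) * (c ^ (-d) / d) / (exp (-s * t / 2) * (s ^ (p + 1) / (p + 1))) :=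
        div_le_div₀ (by positivity) hN (by positivity) hD
    _ = (p + 1) / (d * s ^ (p + 1)) * c ^ (-d) * exp (-ξ * (1 - δ) * t / 2) := by
        rw [show -ξ * t / 2 = -ξ * (1 - δ) * t / 2 + -s * t / 2 by ring, exp_add]
        field_simp

/-- Lemma 5: under the Exponential-Inverse-Gamma posterior,
`E[κ · 1{κ > ξ}] ≤ K c^{-d} exp(-ξ(1-δ)t/2)`. -/
theorem EIG_posterior_kappa_above_bound
    (d : ℝ) (k : ℕ) (ξ δ : ℝ) (hd0 : 0 < d) (hd1 : d < 1) (hk : 1 ≤ k)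
    (hξ : ξ ∈ Ioo (0:ℝ) 1) (hδ : δ ∈ Ioo (0:ℝ) 1) :
    ∃ K : ℝ, 0 < K ∧ ∀ c ∈ Ioo (0:ℝ) 1, ∀ t : ℝ, 0 ≤ t →
      (∫ κ in Ioo ξ 1,
          κ * (κ ^ (d + (k : ℝ) / 2 - 1) * (1 - κ + κ * c) ^ (-d - 1) *
            Real.exp (-κ * t / 2))) /
        (∫ κ in Ioo (0:ℝ) 1,
          κ ^ (d + (k : ℝ) / 2 - 1) * (1 - κ + κ * c) ^ (-d - 1) *
            Real.exp (-κ * t / 2))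
      ≤ K * c ^ (-d) * Real.exp (-ξ * (1 - δ) * t / 2) :=
  EIG_posterior_kappa_above_bound_general d k ξ δ hd0 hd1 hξ hδ
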